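/- Let {X_ℓ, f_ℓ} and {Y_ℓ, g_ℓ} be inverse sequences of compact metric spaces with surjective continuous bonding functions, let (n_ℓ) and (m_ℓ) be sequences of positive integers with m_{k+1} ≥ m_k, n_{k+1} > n_k, and m_k ≥ n_k for each k, and let (H_ℓ) be a sequence of upper semicontinuous set-valued functions H_ℓ : X_{m_ℓ} ⊸ Y_{n_ℓ} such that: (a) for each positive integer k, each j ∈ {1, …, n_k}, each positive integer r > k and each x ∈ X_{m_r}, g_{j,n_r}(H_r(x)) ⊆ g_{j,n_k}(H_k(f_{m_k,m_r}(x))); and (b) for each positive integer j and each x ∈ varprojlim{X_ℓ, f_ℓ}, lim_{k→∞} diam(g_{j,n_k}(H_k(p_{m_k}(x)))) = 0. Then there is a continuous function g : varprojlim{X_ℓ, f_ℓ} → varprojlim{Y_ℓ, g_ℓ} such that for each positive integer k, each j ∈ {1, …, n_k}, and each x ∈ varprojlim{X_ℓ, f_ℓ}, q_j(g(x)) ∈ g_{j,n_k}(H_k(p_{m_k}(x))). -/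

import Mathlib

open Metric Filter Set Function

/-- The inverse limit of an inverse sequence `{X n, f n}` of spaces with
single-valued bonding maps `f n : X (n+1) → X n`. -/
def invLim (X : ℕ → Type*) (f : ∀ n, X (n + 1) → X n) : Set (∀ n, X n) :=
  {x | ∀ n, x n = f n (x (n + 1))}

/-- The composite bonding map `f_{n,m} : X m → X n` for `n ≤ m`. -/
def bondMap {X : ℕ → Type*} (f : ∀ n, X (n + 1) → X n) {n m : ℕ} (h : n ≤ m) :
    X m → X n :=
  Nat.leRecOn (C := fun k => X k → X n) h (fun {k} g => g ∘ f k) id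

/-- A set-valued function is upper semicontinuous (with nonempty closed values):
all of its values are nonempty closed sets and its graph is closed. -/
def IsUSC {A B : Type*} [TopologicalSpace A] [TopologicalSpace B] (F : A → Set B) : Prop :=
  (∀ a, (F a).Nonempty) ∧ (∀ a, IsClosed (F a)) ∧ IsClosed {p : A × B | p.2 ∈ F p.1}

/-- The `T_{n,m}` transformation of a map between inverse limits:
`T_{n,m}(g)(x) = q_n (g (p_m ⁻¹ x))`. -/
def Ttrans {X Y : ℕ → Type*} {f : ∀ n, X (n + 1) → X n} {gs : ∀ n, Y (n + 1) → Y n}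
    (g : ↥(invLim X f) → ↥(invLim Y gs)) (n m : ℕ) (x : X m) : Set (Y n) :=
  {y | ∃ z : ↥(invLim X f), z.1 m = x ∧ (g z).1 n = y}

/-- A space has the fixed point property if every continuous self-map has a fixed point. -/
def HasFPP (Z : Type*) [TopologicalSpace Z] : Prop :=
  ∀ g : Z → Z, Continuous g → ∃ p, g p = p

open Topology

/-
For a fixed coordinate `j`, the sets `g_{j,n_k}(H_k(p_{m_k}(x)))` form a decreasing sequence of
nonempty compacta whose diameters tend to `0`, so they shrink to a single point `g_j(x)`.
Uniqueness of that point makes `(g_j(x))_j` a thread of the inverse limit, and upper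
semicontinuity of `H_k` together with the small diameters gives continuity of `x ↦ g_j(x)`.
-/

theorem bondMap_self {X : ℕ → Type*} (f : ∀ n, X (n + 1) → X n) {n : ℕ} (h : n ≤ n) :
    bondMap f h = id := Nat.leRecOn_self (C := fun k => X k → X n) id

theorem bondMap_succ {X : ℕ → Type*} (f : ∀ n, X (n + 1) → X n) {n m : ℕ} (h : n ≤ m)
    (h' : n ≤ m + 1) : bondMap f h' = bondMap f h ∘ f m :=
  Nat.leRecOn_succ (C := fun k => X k → X n) h id

theorem comp_bondMap {X : ℕ → Type*} (f : ∀ n, X (n + 1) → X n) {n m : ℕ} (h : n + 1 ≤ m) :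
    f n ∘ bondMap f h = bondMap f (n.le_succ.trans h) := by
  induction m, h using Nat.le_induction with
  | base => rw [bondMap_self, bondMap_succ f le_rfl, bondMap_self]; rfl
  | succ m hm ih => rw [bondMap_succ f hm, bondMap_succ f (n.le_succ.trans hm), ← ih]; rfl

theorem bondMap_apply_of_mem_invLim {X : ℕ → Type*} (f : ∀ n, X (n + 1) → X n)
    {z : ∀ n, X n} (hz : z ∈ invLim X f) {n m : ℕ} (h : n ≤ m) : bondMap f h (z m) = z n := by
  induction m, h using Nat.le_induction with
  | base => rw [bondMap_self]; rfl
  | succ m hm ih => rw [bondMap_succ f hm, comp_apply, ← hz m, ih]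

theorem continuous_bondMap {X : ℕ → Type*} [∀ n, TopologicalSpace (X n)]
    {f : ∀ n, X (n + 1) → X n} (hf : ∀ n, Continuous (f n)) {n m : ℕ} (h : n ≤ m) :
    Continuous (bondMap f h) := by
  induction m, h using Nat.le_induction with
  | base => rw [bondMap_self]; exact continuous_id
  | succ m hm ih => rw [bondMap_succ f hm]; exact ih.comp (hf m)

theorem eventually_subset_of_isClosed_graph {A B : Type*} [TopologicalSpace A]
    [TopologicalSpace B] [CompactSpace B] {F : A → Set B}
    (hF : IsClosed {p : A × B | p.2 ∈ F p.1}) {x₀ : A} {U : Set B} (hU : IsOpen U)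
    (hx₀ : F x₀ ⊆ U) : ∀ᶠ x in 𝓝 x₀, F x ⊆ U := by
  -- `{x | ¬ F x ⊆ U}` is the projection of a closed set along the compact factor `B`
  have hbad : IsClosed (Prod.fst '' ({p : A × B | p.2 ∈ F p.1} ∩ univ ×ˢ Uᶜ)) :=
    isClosedMap_fst_of_compactSpace _ (hF.inter (isClosed_univ.prod hU.isClosed_compl))
  filter_upwards [hbad.isOpen_compl.mem_nhds fun ⟨p, ⟨hp, _, hpU⟩, hp₀⟩ => hpU (hx₀ (hp₀ ▸ hp))]
    with x hx y hy
  by_contra hyU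
  exact hx ⟨(x, y), ⟨hy, trivial, hyU⟩, rfl⟩

theorem eq_of_eventually_mem_of_tendsto_diam {Y : Type*} [MetricSpace Y] {S : ℕ → Set Y}
    (hS : ∀ k, Bornology.IsBounded (S k)) (hdiam : Tendsto (fun k => diam (S k)) atTop (𝓝 0))
    {y y' : Y} (hy : ∀ᶠ k in atTop, y ∈ S k) (hy' : ∀ᶠ k in atTop, y' ∈ S k) : y = y' :=
  dist_le_zero.1 <| ge_of_tendsto hdiam <|
    (hy.and hy').mono fun k h => dist_le_diam_of_mem (hS k) h.1 h.2

theorem exists_continuous_forall_mem_of_antitone {Z Y : Type*} [TopologicalSpace Z]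
    [MetricSpace Y] (S : ℕ → Z → Set Y) (hcpt : ∀ k z, IsCompact (S k z))
    (hne : ∀ k z, (S k z).Nonempty) (hanti : ∀ z, Antitone (S · z))
    (hdiam : ∀ z, Tendsto (fun k => diam (S k z)) atTop (𝓝 0))
    (husc : ∀ k z₀ U, IsOpen U → S k z₀ ⊆ U → ∀ᶠ z in 𝓝 z₀, S k z ⊆ U) :
    ∃ c : Z → Y, Continuous c ∧ ∀ k z, c z ∈ S k z := by
  have hinter : ∀ z, (⋂ k, S k z).Nonempty := fun z =>
    (hcpt 0 z).nonempty_iInter_of_sequence_nonempty_isCompact_isClosed _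
      (fun k => hanti z k.le_succ) (fun k => hne k z) fun k => (hcpt k z).isClosed
  choose c hc using hinter
  simp only [mem_iInter] at hc
  refine ⟨c, continuous_iff_continuousAt.2 fun z₀ => Metric.tendsto_nhds.2 fun ε hε => ?_,
    fun k z => hc z k⟩
  obtain ⟨K, hK⟩ := ((hdiam z₀).eventually (gt_mem_nhds (half_pos hε))).exists
  filter_upwards [husc K z₀ _ isOpen_thickening (self_subset_thickening (half_pos hε) _)]
    with z hz
  obtain ⟨a, ha, hca⟩ := mem_thickening_iff.1 (hz (hc z K))
  have haz₀ : dist a (c z₀) < ε / 2 :=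
    (dist_le_diam_of_mem (hcpt K z₀).isBounded ha (hc z₀ K)).trans_lt hK
  calc dist (c z) (c z₀) ≤ dist (c z) a + dist a (c z₀) := dist_triangle _ _ _
    _ < ε / 2 + ε / 2 := add_lt_add hca haz₀
    _ = ε := add_halves ε

section coordApprox

variable {X Y : ℕ → Type*} {f : ∀ n, X (n + 1) → X n} (gs : ∀ n, Y (n + 1) → Y n)
  {ns ms : ℕ → ℕ} (H : ∀ k, X (ms k) → Set (Y (ns k)))

/-- `g_{j,n_k}(H_k(p_{m_k}(z)))`, and `univ` at the finitely many stages with `n_k < j`. -/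
def coordApprox (j k : ℕ) (z : ↥(invLim X f)) : Set (Y j) :=
  if hj : j ≤ ns k then bondMap gs hj '' H k (z.1 (ms k)) else univ

theorem coordApprox_of_le {j k : ℕ} (hj : j ≤ ns k) (z : ↥(invLim X f)) :
    coordApprox gs H j k z = bondMap gs hj '' H k (z.1 (ms k)) :=
  dif_pos hj

theorem image_coordApprox_succ {j k : ℕ} (hj : j + 1 ≤ ns k) (z : ↥(invLim X f)) :
    gs j '' coordApprox gs H (j + 1) k z = coordApprox gs H j k z := by
  rw [coordApprox_of_le gs H hj, coordApprox_of_le gs H (j.le_succ.trans hj), image_image,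
    ← comp_bondMap gs hj]
  rfl

theorem antitone_coordApprox (hns : Monotone ns) (hms : ∀ k, ms k ≤ ms (k + 1))
    (ha : ∀ k j (hj : j ≤ ns k) (x : X (ms (k + 1))),
      bondMap gs (hj.trans (hns k.le_succ)) '' H (k + 1) x ⊆
        bondMap gs hj '' H k (bondMap f (hms k) x))
    (j : ℕ) (z : ↥(invLim X f)) : Antitone (coordApprox gs H j · z) := by
  refine antitone_nat_of_succ_le fun k => ?_
  by_cases hj : j ≤ ns k
  · rw [coordApprox_of_le gs H hj, coordApprox_of_le gs H (hj.trans (hns k.le_succ)),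
      ← bondMap_apply_of_mem_invLim f z.2 (hms k)]
    exact ha k j hj _
  · simp only [coordApprox, dif_neg hj, subset_univ]

theorem tendsto_diam_coordApprox [∀ n, PseudoMetricSpace (Y n)] (hns : Tendsto ns atTop atTop)
    (j : ℕ) (z : ↥(invLim X f))
    (hb : Tendsto (fun k => diam (if hj : j ≤ ns k then
        bondMap gs hj '' H k (z.1 (ms k)) else (∅ : Set (Y j)))) atTop (𝓝 0)) :
    Tendsto (fun k => diam (coordApprox gs H j k z)) atTop (𝓝 0) :=
  hb.congr' <| (hns.eventually_ge_atTop j).mono fun k hj => by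
    rw [dif_pos hj]
    exact congrArg diam (coordApprox_of_le gs H hj z).symm

variable [∀ n, TopologicalSpace (X n)] [∀ n, TopologicalSpace (Y n)]

theorem coordApprox_nonempty (hns : Tendsto ns atTop atTop) (hH : ∀ k, IsUSC (H k))
    (j k : ℕ) (z : ↥(invLim X f)) : (coordApprox gs H j k z).Nonempty := by
  unfold coordApprox
  split_ifs with hj
  · exact ((hH k).1 _).image _
  · obtain ⟨k', hk'⟩ := (hns.eventually_ge_atTop j).exists
    exact ⟨bondMap gs hk' ((hH k').1 (z.1 (ms k'))).some, trivial⟩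

variable [∀ n, CompactSpace (Y n)]

theorem isCompact_coordApprox (hgc : ∀ n, Continuous (gs n)) (hH : ∀ k, IsUSC (H k))
    (j k : ℕ) (z : ↥(invLim X f)) : IsCompact (coordApprox gs H j k z) := by
  unfold coordApprox
  split_ifs with hj
  · exact ((hH k).2.1 _).isCompact.image (continuous_bondMap hgc hj)
  · exact isCompact_univ

theorem eventually_coordApprox_subset (hgc : ∀ n, Continuous (gs n)) (hH : ∀ k, IsUSC (H k))
    (j k : ℕ) (z₀ : ↥(invLim X f)) (U : Set (Y j)) (hU : IsOpen U)
    (hz₀ : coordApprox gs H j k z₀ ⊆ U) : ∀ᶠ z in 𝓝 z₀, coordApprox gs H j k z ⊆ U := by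
  by_cases hj : j ≤ ns k
  · simp only [coordApprox_of_le gs H hj, image_subset_iff] at hz₀ ⊢
    have hproj : Continuous fun z : ↥(invLim X f) => z.1 (ms k) :=
      (continuous_apply _).comp continuous_subtype_val
    exact hproj.continuousAt.eventually <| eventually_subset_of_isClosed_graph (hH k).2.2
      (hU.preimage (continuous_bondMap hgc hj)) hz₀
  · rw [coordApprox, dif_neg hj] at hz₀
    exact Eventually.of_forall fun z => (subset_univ _).trans hz₀

end coordApprox

theorem stmt6_general
    {X Y : ℕ → Type*} [∀ n, MetricSpace (X n)]
    [∀ n, MetricSpace (Y n)] [∀ n, CompactSpace (Y n)]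
    (f : ∀ n, X (n + 1) → X n) (gs : ∀ n, Y (n + 1) → Y n)
    (hgc : ∀ n, Continuous (gs n))
    (ns ms : ℕ → ℕ)
    (hms : ∀ k, ms k ≤ ms (k + 1)) (hns : ∀ k, ns k < ns (k + 1))
    (H : ∀ k, X (ms k) → Set (Y (ns k))) (hH : ∀ k, IsUSC (H k))
    (ha : ∀ k r : ℕ, k < r → ∀ (hnr : ns k ≤ ns r) (hmr : ms k ≤ ms r),
      ∀ j : ℕ, ∀ hj : j ≤ ns k, ∀ x : X (ms r),
        bondMap gs (hj.trans hnr) '' H r x ⊆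
          bondMap gs hj '' H k (bondMap f hmr x))
    (hb : ∀ j : ℕ, ∀ z : ↥(invLim X f),
      Tendsto (fun k =>
          diam (if hj : j ≤ ns k then
            bondMap gs hj '' H k (z.1 (ms k))
          else (∅ : Set (Y j))))
        atTop (nhds (0 : ℝ))) :
    ∃ g : ↥(invLim X f) → ↥(invLim Y gs), Continuous g ∧
      ∀ k j : ℕ, ∀ hj : j ≤ ns k, ∀ z : ↥(invLim X f),
        (g z).1 j ∈ bondMap gs hj '' H k (z.1 (ms k)) := by
  have hns' : StrictMono ns := strictMono_nat_of_lt_succ hns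
  have hcpt := isCompact_coordApprox (f := f) gs H hgc hH
  have hdiam j z := tendsto_diam_coordApprox gs H hns'.tendsto_atTop j z (hb j z)
  choose c hc_cont hc_mem using fun j =>
    exists_continuous_forall_mem_of_antitone (coordApprox (f := f) gs H j) (hcpt j)
      (coordApprox_nonempty gs H hns'.tendsto_atTop hH j)
      (antitone_coordApprox gs H hns'.monotone hms
        (fun k => ha k (k + 1) k.lt_succ_self (hns'.monotone k.le_succ) (hms k)) j)
      (hdiam j) (eventually_coordApprox_subset gs H hgc hH j)
  have hthread j z : gs j (c (j + 1) z) = c j z :=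
    eq_of_eventually_mem_of_tendsto_diam (fun k => (hcpt j k z).isBounded) (hdiam j z)
      ((hns'.tendsto_atTop.eventually_ge_atTop (j + 1)).mono fun k hk =>
        image_coordApprox_succ gs H hk z ▸ mem_image_of_mem _ (hc_mem (j + 1) k z))
      (Eventually.of_forall fun k => hc_mem j k z)
  refine ⟨fun z => ⟨fun j => c j z, fun j => (hthread j z).symm⟩,
    (continuous_pi hc_cont).subtype_mk _, fun k j hj z => ?_⟩
  simpa only [coordApprox_of_le gs H hj] using hc_mem j k z

theorem stmt6
    {X Y : ℕ → Type*} [∀ n, MetricSpace (X n)] [∀ n, CompactSpace (X n)]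
    [∀ n, MetricSpace (Y n)] [∀ n, CompactSpace (Y n)]
    (f : ∀ n, X (n + 1) → X n) (gs : ∀ n, Y (n + 1) → Y n)
    (hfc : ∀ n, Continuous (f n)) (hfs : ∀ n, Surjective (f n))
    (hgc : ∀ n, Continuous (gs n)) (hgs : ∀ n, Surjective (gs n))
    (ns ms : ℕ → ℕ)
    (hms : ∀ k, ms k ≤ ms (k + 1)) (hns : ∀ k, ns k < ns (k + 1))
    (hnm : ∀ k, ns k ≤ ms k)
    (H : ∀ k, X (ms k) → Set (Y (ns k))) (hH : ∀ k, IsUSC (H k))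
    (ha : ∀ k r : ℕ, k < r → ∀ (hnr : ns k ≤ ns r) (hmr : ms k ≤ ms r),
      ∀ j : ℕ, ∀ hj : j ≤ ns k, ∀ x : X (ms r),
        bondMap gs (hj.trans hnr) '' H r x ⊆
          bondMap gs hj '' H k (bondMap f hmr x))
    (hb : ∀ j : ℕ, ∀ z : ↥(invLim X f),
      Tendsto (fun k =>
          diam (if hj : j ≤ ns k then
            bondMap gs hj '' H k (z.1 (ms k))
          else (∅ : Set (Y j))))
        atTop (nhds (0 : ℝ))) :
    ∃ g : ↥(invLim X f) → ↥(invLim Y gs), Continuous g ∧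
      ∀ k j : ℕ, ∀ hj : j ≤ ns k, ∀ z : ↥(invLim X f),
        (g z).1 j ∈ bondMap gs hj '' H k (z.1 (ms k)) :=
  stmt6_general f gs hgc ns ms hms hns H hH ha hb
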